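/- Let C₁ and C₂ be cycles of length at least k in G, with maximal good sets H(C₁) and H(C₂) containing them respectively. Then either H(C₁) = H(C₂) or H(C₁) ∩ H(C₂) = ∅; moreover, in the latter case there is at most one edge of G between H(C₁) and H(C₂). -/

import Mathlib

/-- `X ⊆ V(G)` is good (w.r.t. `k`) if every vertex of `X` lies on a cycle of length
at least `k/2` in `G[X]`, and any two distinct vertices of `X` are joined by a path
of length at least `k/2` in `G[X]`. -/
def Good {V : Type*} (G : SimpleGraph V) (k : ℕ) (X : Set V) : Prop :=
  (∀ u : X, ∃ c : (G.induce X).Walk u u, c.IsCycle ∧ k ≤ 2 * c.length) ∧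
  (∀ u v : X, u ≠ v → ∃ p : (G.induce X).Walk u v, p.IsPath ∧ k ≤ 2 * p.length)

/-! If `H₁` and `H₂` meet, then `H₁ ∪ H₂` is again good and maximality gives `H₁ = H₂`; if they
are disjoint but joined by two distinct edges, `H₁ ∪ H₂` is good as well, contradicting the
maximality of `H₁`. Cycles of `H₁ ∪ H₂` are
inherited from the parts. A long path from `u ∈ H₁` to `v ∈ H₂` runs inside one part to a junction
and then inside the other: the junction is the first vertex of `H₁` on a path of `H₂` from `v` to a
common vertex, or an edge `ab ≠ uv` between the parts, in which case one of the two pieces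
`u ⋯ a`, `b ⋯ v` is nontrivial and hence already long. -/

open SimpleGraph

namespace SimpleGraph.Walk

variable {V : Type*} {G : SimpleGraph V}

lemma IsPath.append {u v w : V} {p : G.Walk u v} {q : G.Walk v w} (hp : p.IsPath)
    (hq : q.IsPath) (h : ∀ x ∈ p.support, x ∈ q.support → x = v) : (p.append q).IsPath := by
  rw [isPath_def, support_append]
  have hq' := hq.support_nodup
  rw [← q.cons_tail_support, List.nodup_cons] at hq'
  refine hp.support_nodup.append hq'.2 fun x hxp hxq => ?_
  obtain rfl := h x hxp (List.mem_of_mem_tail hxq)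
  exact hq'.1 hxq

lemma IsPath.exists_prefix_first_mem (A : Set V) :
    ∀ {v w : V} {q : G.Walk v w}, q.IsPath → w ∈ A →
      ∃ x ∈ A, ∃ q' : G.Walk v x, q'.IsPath ∧ q'.support ⊆ q.support ∧
        ∀ y ∈ q'.support, y ∈ A → y = x
  | _, _, .nil, _, hw => ⟨_, hw, .nil, .nil, by simp, by simp⟩
  | v, _, .cons h q, hq, hw => by
    by_cases hv : v ∈ A
    · exact ⟨v, hv, .nil, .nil, by simp, by simp⟩
    obtain ⟨x, hx, q', hq', hsub, hfirst⟩ := hq.of_cons.exists_prefix_first_mem A hw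
    refine ⟨x, hx, .cons h q', hq'.cons fun hvq' => ((cons_isPath_iff _ _).1 hq).2 (hsub hvq'),
      List.cons_subset_cons _ hsub, ?_⟩
    rintro y hy hyA
    rcases List.mem_cons.1 (support_cons h q' ▸ hy) with rfl | hy
    · exact absurd hyA hv
    · exact hfirst y hy hyA

end SimpleGraph.Walk

section

variable {V : Type*}

def HasLongPathIn (G : SimpleGraph V) (k : ℕ) (X : Set V) (u v : V) : Prop :=
  ∃ p : G.Walk u v, p.IsPath ∧ k ≤ 2 * p.length ∧ ∀ x ∈ p.support, x ∈ X

variable {G : SimpleGraph V} {k : ℕ}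

lemma HasLongPathIn.symm {X : Set V} {u v : V} (h : HasLongPathIn G k X u v) :
    HasLongPathIn G k X v u := by
  obtain ⟨p, hp, hl, hs⟩ := h
  exact ⟨p.reverse, hp.reverse, by rwa [Walk.length_reverse], by simpa using hs⟩

lemma HasLongPathIn.mono {X Y : Set V} (hXY : X ⊆ Y) {u v : V} (h : HasLongPathIn G k X u v) :
    HasLongPathIn G k Y u v := by
  obtain ⟨p, hp, hl, hs⟩ := h
  exact ⟨p, hp, hl, fun x hx => hXY (hs x hx)⟩

lemma HasLongPathIn.exists_induce {X : Set V} {u v : V} (h : HasLongPathIn G k X u v)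
    (hu : u ∈ X) (hv : v ∈ X) :
    ∃ p : (G.induce X).Walk ⟨u, hu⟩ ⟨v, hv⟩, p.IsPath ∧ k ≤ 2 * p.length := by
  obtain ⟨p, hp, hl, hs⟩ := h
  have hmap := p.map_induce hs
  refine ⟨p.induce X hs, ?_, ?_⟩
  · rw [← hmap] at hp
    exact hp.of_map
  · have hlen := congrArg Walk.length hmap
    rw [Walk.length_map] at hlen
    rwa [hlen]

lemma Good.hasLongPathIn {X : Set V} (h : Good G k X) {u v : V} (hu : u ∈ X) (hv : v ∈ X)
    (huv : u ≠ v) : HasLongPathIn G k X u v := by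
  obtain ⟨p, hp, hl⟩ := h.2 ⟨u, hu⟩ ⟨v, hv⟩ (Subtype.coe_ne_coe.1 huv)
  let e := Embedding.induce (G := G) X
  have hl' : k ≤ 2 * (p.map e.toHom).length := by rwa [Walk.length_map]
  have hs : ∀ x ∈ (p.map e.toHom).support, x ∈ X := by
    intro x hx
    rw [Walk.support_map, List.mem_map] at hx
    obtain ⟨y, -, rfl⟩ := hx
    exact y.2
  exact ⟨p.map e.toHom, hp.map e.injective, hl', hs⟩

lemma Good.exists_isPath {X : Set V} (h : Good G k X) {u v : V} (hu : u ∈ X) (hv : v ∈ X) :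
    ∃ p : G.Walk u v, p.IsPath ∧ (u ≠ v → k ≤ 2 * p.length) ∧ ∀ x ∈ p.support, x ∈ X := by
  by_cases huv : u = v
  · subst huv
    exact ⟨.nil, .nil, fun h => absurd rfl h, by simpa⟩
  · obtain ⟨p, hp, hl, hs⟩ := h.hasLongPathIn hu hv huv
    exact ⟨p, hp, fun _ => hl, hs⟩

lemma Good.exists_isCycle_of_subset {X Y : Set V} (h : Good G k X) (hXY : X ⊆ Y) {u : V}
    (hu : u ∈ X) :
    ∃ c : (G.induce Y).Walk ⟨u, hXY hu⟩ ⟨u, hXY hu⟩, c.IsCycle ∧ k ≤ 2 * c.length := by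
  obtain ⟨c, hc, hl⟩ := h.1 ⟨u, hu⟩
  exact ⟨c.map (G.induceHomOfLE hXY).toHom,
    (Walk.isCycle_map_iff_of_injective (G.induceHomOfLE hXY).injective).2 hc,
    hl.trans_eq (congrArg (2 * ·) (c.length_map _).symm)⟩

variable {H₁ H₂ : Set V}

lemma Good.union_of_hasLongPathIn (h₁ : Good G k H₁) (h₂ : Good G k H₂)
    (hcross : ∀ u ∈ H₁, ∀ v ∈ H₂, u ≠ v → HasLongPathIn G k (H₁ ∪ H₂) u v) :
    Good G k (H₁ ∪ H₂) := by
  refine ⟨?_, ?_⟩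
  · rintro ⟨u, hu | hu⟩
    · exact h₁.exists_isCycle_of_subset Set.subset_union_left hu
    · exact h₂.exists_isCycle_of_subset Set.subset_union_right hu
  · rintro ⟨u, hu⟩ ⟨v, hv⟩ huv
    replace huv : u ≠ v := fun h => huv (Subtype.ext h)
    refine HasLongPathIn.exists_induce ?_ hu hv
    rcases hu with hu | hu <;> rcases hv with hv | hv
    · exact (h₁.hasLongPathIn hu hv huv).mono Set.subset_union_left
    · exact hcross u hu v hv huv
    · exact (hcross v hv u hu huv.symm).symm
    · exact (h₂.hasLongPathIn hu hv huv).mono Set.subset_union_right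

lemma Good.union_of_inter_nonempty (h₁ : Good G k H₁) (h₂ : Good G k H₂)
    (hinter : (H₁ ∩ H₂).Nonempty) : Good G k (H₁ ∪ H₂) := by
  obtain ⟨w, hw₁, hw₂⟩ := hinter
  refine h₁.union_of_hasLongPathIn h₂ fun u hu₁ v hv₂ huv => ?_
  by_cases hu₂ : u ∈ H₂
  · exact (h₂.hasLongPathIn hu₂ hv₂ huv).mono Set.subset_union_right
  by_cases hv₁ : v ∈ H₁
  · exact (h₁.hasLongPathIn hu₁ hv₁ huv).mono Set.subset_union_left
  obtain ⟨q, hq, -, hq₂⟩ := h₂.hasLongPathIn hv₂ hw₂ (by rintro rfl; exact hv₁ hw₁)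
  obtain ⟨x, hx₁, q', hq', hsub, hfirst⟩ := hq.exists_prefix_first_mem H₁ hw₁
  have hx₂ : x ∈ H₂ := hq₂ x (hsub q'.end_mem_support)
  obtain ⟨p, hp, hl, hp₁⟩ := h₁.hasLongPathIn hu₁ hx₁ (by rintro rfl; exact hu₂ hx₂)
  refine ⟨p.append q'.reverse, hp.append hq'.reverse fun y hyp hyq => ?_, ?_, ?_⟩
  · exact hfirst y (by simpa using hyq) (hp₁ y hyp)
  · rw [Walk.length_append]; omega
  · intro y hy
    rw [Walk.mem_support_append_iff, Walk.support_reverse, List.mem_reverse] at hy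
    exact hy.imp (hp₁ y) (fun hy => hq₂ y (hsub hy))

lemma hasLongPathIn_union_of_adj (h₁ : Good G k H₁) (h₂ : Good G k H₂) (hdisj : Disjoint H₁ H₂)
    {a b u v : V} (ha : a ∈ H₁) (hb : b ∈ H₂) (hab : G.Adj a b) (hu : u ∈ H₁) (hv : v ∈ H₂)
    (hne : (u, v) ≠ (a, b)) : HasLongPathIn G k (H₁ ∪ H₂) u v := by
  obtain ⟨p, hp, hlp, hp₁⟩ := h₁.exists_isPath hu ha
  obtain ⟨q, hq, hlq, hq₂⟩ := h₂.exists_isPath hb hv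
  have hnot₁ : ∀ y ∈ q.support, y ∉ H₁ := fun y hy hy₁ => hdisj.ne_of_mem hy₁ (hq₂ y hy) rfl
  refine ⟨p.append (.cons hab q), hp.append (hq.cons fun h => hnot₁ a h ha) fun y hyp hyq => ?_,
    ?_, ?_⟩
  · rw [Walk.support_cons, List.mem_cons] at hyq
    exact hyq.resolve_right fun hy => hnot₁ y hy (hp₁ y hyp)
  · rw [Walk.length_append, Walk.length_cons]
    by_cases hua : u = a
    · have hbv : b ≠ v := fun hbv => hne (by rw [hua, hbv])
      have := hlq hbv; omega
    · have := hlp hua; omega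
  · intro y hy
    rw [Walk.mem_support_append_iff, Walk.support_cons, List.mem_cons] at hy
    rcases hy with hy | rfl | hy
    · exact Or.inl (hp₁ y hy)
    · exact Or.inl ha
    · exact Or.inr (hq₂ y hy)

lemma Good.union_of_two_adj (h₁ : Good G k H₁) (h₂ : Good G k H₂) (hdisj : Disjoint H₁ H₂)
    {a b c d : V} (ha : a ∈ H₁) (hb : b ∈ H₂) (hab : G.Adj a b)
    (hc : c ∈ H₁) (hd : d ∈ H₂) (hcd : G.Adj c d) (hne : (a, b) ≠ (c, d)) :
    Good G k (H₁ ∪ H₂) := by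
  refine h₁.union_of_hasLongPathIn h₂ fun u hu v hv _ => ?_
  by_cases huv : (u, v) = (a, b)
  · exact hasLongPathIn_union_of_adj h₁ h₂ hdisj hc hd hcd hu hv (huv ▸ hne)
  · exact hasLongPathIn_union_of_adj h₁ h₂ hdisj ha hb hab hu hv huv

end

theorem stmt_6_general {V : Type*} (G : SimpleGraph V) (k : ℕ)
    (H₁ H₂ : Set V) (hH₁ : Good G k H₁) (hH₂ : Good G k H₂)
    (hmax₁ : ∀ H' : Set V, Good G k H' → H₁ ⊆ H' → H' = H₁)
    (hmax₂ : ∀ H' : Set V, Good G k H' → H₂ ⊆ H' → H' = H₂) :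
    H₁ = H₂ ∨ (H₁ ∩ H₂ = ∅ ∧
      {e : V × V | e.1 ∈ H₁ ∧ e.2 ∈ H₂ ∧ G.Adj e.1 e.2}.ncard ≤ 1) := by
  by_cases hinter : (H₁ ∩ H₂).Nonempty
  · have hU := hH₁.union_of_inter_nonempty hH₂ hinter
    exact Or.inl ((hmax₁ _ hU Set.subset_union_left).symm.trans (hmax₂ _ hU Set.subset_union_right))
  have hempty : H₁ ∩ H₂ = ∅ := Set.not_nonempty_iff_eq_empty.1 hinter
  have hdisj : Disjoint H₁ H₂ := Set.disjoint_iff_inter_eq_empty.2 hempty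
  refine Or.inr ⟨hempty, ?_⟩
  have hsub : {e : V × V | e.1 ∈ H₁ ∧ e.2 ∈ H₂ ∧ G.Adj e.1 e.2}.Subsingleton := by
    rintro ⟨a, b⟩ ⟨ha, hb, hab⟩ ⟨c, d⟩ ⟨hc, hd, hcd⟩
    by_contra hne
    have hU := hH₁.union_of_two_adj hH₂ hdisj ha hb hab hc hd hcd hne
    have hb₁ : b ∈ H₁ := hmax₁ _ hU Set.subset_union_left ▸ Or.inr hb
    exact hdisj.ne_of_mem hb₁ hb rfl
  rcases hsub.eq_empty_or_singleton with h | ⟨e, h⟩ <;> simp [h]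

/-- For two cycles `C₁, C₂` of length at least `k` with maximal good sets `H₁, H₂`
containing them, either `H₁ = H₂` or they are disjoint, and in the latter case there
is at most one edge of `G` between `H₁` and `H₂`. -/
theorem stmt_6 {V : Type*} [Fintype V] (G : SimpleGraph V) (k : ℕ)
    (u₁ u₂ : V) (c₁ : G.Walk u₁ u₁) (c₂ : G.Walk u₂ u₂)
    (hc₁ : c₁.IsCycle) (hk₁ : k ≤ c₁.length)
    (hc₂ : c₂.IsCycle) (hk₂ : k ≤ c₂.length)
    (H₁ H₂ : Set V) (hH₁ : Good G k H₁) (hH₂ : Good G k H₂)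
    (hC₁ : {v | v ∈ c₁.support} ⊆ H₁) (hC₂ : {v | v ∈ c₂.support} ⊆ H₂)
    (hmax₁ : ∀ H' : Set V, Good G k H' → H₁ ⊆ H' → H' = H₁)
    (hmax₂ : ∀ H' : Set V, Good G k H' → H₂ ⊆ H' → H' = H₂) :
    H₁ = H₂ ∨ (H₁ ∩ H₂ = ∅ ∧
      {e : V × V | e.1 ∈ H₁ ∧ e.2 ∈ H₂ ∧ G.Adj e.1 e.2}.ncard ≤ 1) :=
  stmt_6_general G k H₁ H₂ hH₁ hH₂ hmax₁ hmax₂
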